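/- arXiv:1105.5080 — 4 statements merged into one kernel-verified Lean document; each statement's English description precedes it below -/
import Mathlib

section
/- (Periodicity of feasible FTP schedules) For any preemptive fixed-task-priority scheduling algorithm A on m unit-capacity processors, if an asynchronous constrained-deadline periodic task system τ = {τ_1 > ... > τ_n} (priorities decreasing, constant execution times) is A-feasible, then the A-schedule of τ is periodic with period P = lcm(T_1,...,T_n) starting from instant S_n, where S_1 = O_1 and S_i = max{O_i, O_i + ⌈(S_{i-1} − O_i)/T_i⌉·T_i}. -/
namespace FTP

/-- The recurrence `S_1 = O_1`, `S_{i+1} = max (O_{i+1}) (O_{i+1} + ⌈(S_i - O_{i+1})/T_{i+1}⌉·T_{i+1})`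
(0-based; with `ℕ` truncated subtraction, `(x - O + T - 1) / T * T` computes
`max 0 ⌈(x - O)/T⌉ · T`, so this is exactly the recurrence of the paper). -/
def Snat (O T : ℕ → ℕ) : ℕ → ℕ
  | 0 => O 0
  | i + 1 => O (i + 1) + (Snat O T i - O (i + 1) + T (i + 1) - 1) / T (i + 1) * T (i + 1)

/-- Jobs are pairs (task index, instance number). -/
abbrev Job := ℕ × ℕ

/-- Arrival instant of the `k`-th job of task `i`. -/
def arrival (O T : ℕ → ℕ) (j : Job) : ℕ := O j.1 + j.2 * T j.1

/-- Amount of execution received by job `j` before time `t` in schedule `σ`. -/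
def work (σ : ℕ → Finset Job) (j : Job) (t : ℕ) : ℕ :=
  ((Finset.range t).filter (fun s => j ∈ σ s)).card

/-- Job `j` of a task among the `n` tasks is active at `t`: it has arrived and
is not yet completed. -/
def active (n : ℕ) (O C T : ℕ → ℕ) (σ : ℕ → Finset Job) (j : Job) (t : ℕ) : Prop :=
  j.1 < n ∧ arrival O T j ≤ t ∧ work σ j t < C j.1

/-- Job `j'` has higher fixed-task priority than `j` (tasks ordered by decreasing
priority `τ_1 > ⋯ > τ_n`, i.e. lower index = higher priority; jobs of one task
ordered by instance). -/
def hp (j' j : Job) : Prop :=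
  j'.1 < j.1 ∨ (j'.1 = j.1 ∧ j'.2 < j.2)

/-- `σ` is the preemptive FTP schedule of the `n` tasks on `m` unit-capacity
processors: at every instant the `m` highest-priority active jobs execute. -/
def isFTPSchedule (n m : ℕ) (O C T : ℕ → ℕ) (σ : ℕ → Finset Job) : Prop :=
  ∀ t : ℕ,
    (σ t).card ≤ m ∧
    (∀ j ∈ σ t, active n O C T σ j t) ∧
    (∀ j : Job, active n O C T σ j t → j ∉ σ t →
      (σ t).card = m ∧ ∀ j' ∈ σ t, hp j' j)

/-- No job ever misses its deadline. -/
def feasible (n : ℕ) (O C D T : ℕ → ℕ) (σ : ℕ → Finset Job) : Prop :=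
  ∀ j : Job, j.1 < n → work σ j (arrival O T j + D j.1) = C j.1

/-! ### Auxiliary lemmas -/


attribute [local instance] Classical.propDecidable

lemma hp_asymm {j j' : Job} (h : hp j j') (h' : hp j' j) : False := by
  rcases h with h | ⟨h1, h2⟩ <;> rcases h' with h' | ⟨h'1, h'2⟩ <;> omega

lemma work_mono (σ : ℕ → Finset Job) (j : Job) {t t' : ℕ} (h : t ≤ t') :
    work σ j t ≤ work σ j t' :=
  Finset.card_le_card (Finset.filter_subset_filter _ (Finset.range_subset_range.mpr h))

lemma active_of_mem {n m : ℕ} {O C T : ℕ → ℕ} {σ : ℕ → Finset Job}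
    (hσ : isFTPSchedule n m O C T σ) {j : Job} {t : ℕ} (h : j ∈ σ t) :
    active n O C T σ j t := (hσ t).2.1 j h

lemma arrival_le_of_mem {n m : ℕ} {O C T : ℕ → ℕ} {σ : ℕ → Finset Job}
    (hσ : isFTPSchedule n m O C T σ) {j : Job} {t : ℕ} (h : j ∈ σ t) :
    arrival O T j ≤ t := (active_of_mem hσ h).2.1

lemma not_active_done {n : ℕ} {O C D T : ℕ → ℕ} {σ : ℕ → Finset Job}
    (hfeas : feasible n O C D T σ) (hD : ∀ i < n, D i ≤ T i)
    {j : Job} {t : ℕ} (hj : j.1 < n) (h : arrival O T j + T j.1 ≤ t) :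
    ¬ active n O C T σ j t := by
  rintro ⟨-, -, hw⟩
  have h1 := hfeas j hj
  have h2 : work σ j (arrival O T j + D j.1) ≤ work σ j t :=
    work_mono σ j (by have := hD j.1 hj; omega)
  omega

lemma inst_le {n : ℕ} {O C T : ℕ → ℕ} {σ : ℕ → Finset Job}
    (hT : ∀ i < n, 0 < T i) {j : Job} {t : ℕ} (h : active n O C T σ j t) : j.2 ≤ t := by
  obtain ⟨h1, h2, -⟩ := h
  have hT1 := hT j.1 h1
  have h3 : j.2 ≤ j.2 * T j.1 := Nat.le_mul_of_pos_right _ hT1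
  unfold arrival at h2
  omega

noncomputable def HA (n : ℕ) (O C T : ℕ → ℕ) (σ : ℕ → Finset Job) (j : Job) (t : ℕ) :
    Finset Job :=
  (Finset.range n ×ˢ Finset.range (t + 1)).filter fun j' => active n O C T σ j' t ∧ hp j' j

lemma mem_HA {n : ℕ} {O C T : ℕ → ℕ} {σ : ℕ → Finset Job} {j j' : Job} {t : ℕ} :
    j' ∈ HA n O C T σ j t ↔ j'.2 ≤ t ∧ active n O C T σ j' t ∧ hp j' j := by
  simp only [HA, Finset.mem_filter, Finset.mem_product, Finset.mem_range, Nat.lt_succ_iff]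
  constructor
  · rintro ⟨⟨-, h2⟩, h3, h4⟩; exact ⟨h2, h3, h4⟩
  · rintro ⟨h2, h3, h4⟩; exact ⟨⟨h3.1, h2⟩, h3, h4⟩

lemma mem_sigma_iff {n m : ℕ} {O C T : ℕ → ℕ} {σ : ℕ → Finset Job}
    (hσ : isFTPSchedule n m O C T σ) (hT : ∀ i < n, 0 < T i) {j : Job} {t : ℕ} :
    j ∈ σ t ↔ active n O C T σ j t ∧ (HA n O C T σ j t).card < m := by
  obtain ⟨hcard, hact, htop⟩ := hσ t
  constructor
  · intro hmem
    refine ⟨hact j hmem, ?_⟩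
    by_contra hge
    push_neg at hge
    have hsub : HA n O C T σ j t ⊆ σ t := by
      intro j' hj'
      rw [mem_HA] at hj'
      by_contra hnot
      exact hp_asymm hj'.2.2 ((htop j' hj'.2.1 hnot).2 j hmem)
    have hnotin : j ∉ HA n O C T σ j t := by
      intro h
      exact hp_asymm (mem_HA.mp h).2.2 (mem_HA.mp h).2.2
    have hss : HA n O C T σ j t ⊂ σ t :=
      (Finset.ssubset_iff_of_subset hsub).mpr ⟨j, hmem, hnotin⟩
    have := Finset.card_lt_card hss
    omega
  · rintro ⟨hactj, hlt⟩
    by_contra hnot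
    obtain ⟨hcm, hall⟩ := htop j hactj hnot
    have hsub : σ t ⊆ HA n O C T σ j t := by
      intro j' hj'
      rw [mem_HA]
      exact ⟨inst_le hT (hact j' hj'), hact j' hj', hall j' hj'⟩
    have := Finset.card_le_card hsub
    omega

/-! ### Snat lemmas -/

lemma O_le_Snat (O T : ℕ → ℕ) : ∀ a, O a ≤ Snat O T a
  | 0 => le_refl _
  | a + 1 => Nat.le_add_right _ _

lemma dvd_Snat_sub (O T : ℕ → ℕ) : ∀ a, T a ∣ (Snat O T a - O a)
  | 0 => by simp [Snat]
  | a + 1 => by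
      show T (a+1) ∣ (O (a + 1) + _ - O (a + 1))
      rw [Nat.add_sub_cancel_left]
      exact dvd_mul_left _ _

lemma le_ceil_mul {d T : ℕ} (hT : 0 < T) : d ≤ (d + T - 1) / T * T := by
  rcases Nat.eq_zero_or_pos d with rfl | hd
  · simp
  have h1 := Nat.div_add_mod (d + T - 1) T
  have h2 : (d + T - 1) % T < T := Nat.mod_lt _ hT
  rw [Nat.mul_comm]
  omega

lemma Snat_le_succ (O T : ℕ → ℕ) {a : ℕ} (hT : 0 < T (a + 1)) :
    Snat O T a ≤ Snat O T (a + 1) := by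
  show Snat O T a ≤ O (a + 1) + (Snat O T a - O (a + 1) + T (a + 1) - 1) / T (a + 1) * T (a + 1)
  have h := le_ceil_mul (d := Snat O T a - O (a + 1)) hT
  omega

lemma Snat_mono (O T : ℕ → ℕ) {n : ℕ} (hT : ∀ i < n, 0 < T i) :
    ∀ {a b : ℕ}, a ≤ b → b < n → Snat O T a ≤ Snat O T b := by
  intro a b
  induction b with
  | zero => intro h _; have : a = 0 := by omega
            subst this; exact le_refl _
  | succ b ih =>
      intro hab hb
      rcases Nat.lt_or_ge a (b + 1) with h | h
      · exact le_trans (ih (by omega) (by omega)) (Snat_le_succ O T (hT (b + 1) hb))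
      · have : a = b + 1 := by omega
        subst this; exact le_refl _

lemma arrival_dichotomy {O T : ℕ → ℕ} (a k : ℕ) :
    arrival O T (a, k) + T a ≤ Snat O T a ∨ Snat O T a ≤ arrival O T (a, k) := by
  obtain ⟨q, hq⟩ := dvd_Snat_sub O T a
  have hO := O_le_Snat O T a
  show O a + k * T a + T a ≤ _ ∨ _ ≤ O a + k * T a
  rcases Nat.lt_or_ge k q with h | h
  · left
    have h1 : (k + 1) * T a ≤ q * T a := Nat.mul_le_mul_right _ (by omega)
    have h2 : (k + 1) * T a = k * T a + T a := Nat.succ_mul _ _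
    have h3 : q * T a = T a * q := Nat.mul_comm _ _
    omega
  · right
    have h1 : q * T a ≤ k * T a := Nat.mul_le_mul_right _ h
    have h3 : q * T a = T a * q := Nat.mul_comm _ _
    omega

lemma arrival_shift {O T : ℕ → ℕ} {P a k : ℕ} (h : T a ∣ P) :
    arrival O T (a, k + P / T a) = arrival O T (a, k) + P := by
  show O a + (k + P / T a) * T a = O a + k * T a + P
  have h2 : P / T a * T a = P := Nat.div_mul_cancel h
  have h3 : (k + P / T a) * T a = k * T a + P / T a * T a := Nat.add_mul _ _ _
  omega

lemma lo_bound {n : ℕ} {O C D T : ℕ → ℕ} {σ : ℕ → Finset Job} {P : ℕ}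
    (hfeas : feasible n O C D T σ) (hD : ∀ i < n, D i ≤ T i) (hdvd : ∀ a < n, T a ∣ P)
    {a t k : ℕ} (ha : a < n) (hOt : O a ≤ t)
    (hact : active n O C T σ (a, k) (t + P)) : P / T a ≤ k := by
  by_contra h
  push_neg at h
  refine not_active_done hfeas hD (j := (a, k)) ha ?_ hact
  show O a + k * T a + T a ≤ t + P
  have h1 : (k + 1) * T a ≤ P / T a * T a := Nat.mul_le_mul_right _ (by omega)
  have h2 : P / T a * T a = P := Nat.div_mul_cancel (hdvd a ha)
  have h3 : (k + 1) * T a = k * T a + T a := Nat.succ_mul _ _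
  omega

/-! ### Shift lemmas -/

lemma mem_shift {n m : ℕ} {O C D T : ℕ → ℕ} {σ : ℕ → Finset Job} {P : ℕ}
    (hσ : isFTPSchedule n m O C T σ) (hT : ∀ i < n, 0 < T i)
    (hD : ∀ i < n, D i ≤ T i) (hfeas : feasible n O C D T σ) (hdvd : ∀ a < n, T a ∣ P)
    {t : ℕ}
    (hAct : ∀ a, a < n → Snat O T a ≤ t → ∀ k,
      (active n O C T σ (a, k + P / T a) (t + P) ↔ active n O C T σ (a, k) t))
    {a k : ℕ} (ha : a < n) (hSt : Snat O T a ≤ t) :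
    ((a, k + P / T a) ∈ σ (t + P) ↔ (a, k) ∈ σ t) := by
  by_cases hact : active n O C T σ (a, k) t
  · have hact' : active n O C T σ (a, k + P / T a) (t + P) := (hAct a ha hSt k).mpr hact
    rw [mem_sigma_iff hσ hT, mem_sigma_iff hσ hT]
    simp only [hact, hact', true_and]
    have hchar1 : ∀ j' : Job, j' ∈ HA n O C T σ (a, k) t ↔
        j'.1 < a ∧ active n O C T σ j' t := by
      intro j'
      rw [mem_HA]
      constructor
      · rintro ⟨h2, hactj, hhp⟩
        refine ⟨?_, hactj⟩
        rcases hhp with h | ⟨hh1, hh2⟩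
        · exact h
        · exfalso
          refine not_active_done hfeas hD hactj.1 ?_ hactj
          have harr : arrival O T (a, k) ≤ t := hact.2.1
          have hkT : (j'.2 + 1) * T a ≤ k * T a := Nat.mul_le_mul_right _ (by omega)
          have h3 : (j'.2 + 1) * T a = j'.2 * T a + T a := Nat.succ_mul _ _
          have h4 : arrival O T j' = O a + j'.2 * T a := by
            show O j'.1 + j'.2 * T j'.1 = _
            rw [hh1]
          have h5 : arrival O T (a, k) = O a + k * T a := rfl
          rw [h4]
          rw [show T j'.1 = T a from by rw [hh1]]
          omega
      · rintro ⟨hlt, hactj⟩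
        exact ⟨inst_le hT hactj, hactj, Or.inl hlt⟩
    have hchar2 : ∀ j' : Job, j' ∈ HA n O C T σ (a, k + P / T a) (t + P) ↔
        j'.1 < a ∧ active n O C T σ j' (t + P) := by
      intro j'
      rw [mem_HA]
      constructor
      · rintro ⟨h2, hactj, hhp⟩
        refine ⟨?_, hactj⟩
        rcases hhp with h | ⟨hh1, hh2⟩
        · exact h
        · exfalso
          refine not_active_done hfeas hD hactj.1 ?_ hactj
          have harr : arrival O T (a, k + P / T a) ≤ t + P := hact'.2.1
          have hkT : (j'.2 + 1) * T a ≤ (k + P / T a) * T a :=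
            Nat.mul_le_mul_right _ (by omega)
          have h3 : (j'.2 + 1) * T a = j'.2 * T a + T a := Nat.succ_mul _ _
          have h4 : arrival O T j' = O a + j'.2 * T a := by
            show O j'.1 + j'.2 * T j'.1 = _
            rw [hh1]
          have h5 : arrival O T (a, k + P / T a) = O a + (k + P / T a) * T a := rfl
          rw [h4]
          rw [show T j'.1 = T a from by rw [hh1]]
          omega
      · rintro ⟨hlt, hactj⟩
        exact ⟨inst_le hT hactj, hactj, Or.inl hlt⟩
    have hcardeq : (HA n O C T σ (a, k + P / T a) (t + P)).card
        = (HA n O C T σ (a, k) t).card := by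
      refine Finset.card_bij' (fun j'' _ => (j''.1, j''.2 - P / T j''.1))
        (fun j' _ => (j'.1, j'.2 + P / T j'.1)) ?_ ?_ ?_ ?_
      · rintro ⟨b, k'⟩ hb
        rw [hchar2] at hb
        obtain ⟨hba, hactb⟩ := hb
        have hbn : b < n := hactb.1
        have hSb : Snat O T b ≤ t := le_trans (Snat_mono O T hT (by omega) ha) hSt
        have hOb : O b ≤ t := le_trans (O_le_Snat O T b) hSb
        have hlo : P / T b ≤ k' := lo_bound hfeas hD hdvd hbn hOb hactb
        rw [hchar1]
        refine ⟨hba, ?_⟩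
        have := (hAct b hbn hSb (k' - P / T b)).mp ?_
        · exact this
        · rw [show k' - P / T b + P / T b = k' from by omega]
          exact hactb
      · rintro ⟨b, k'⟩ hb
        rw [hchar1] at hb
        obtain ⟨hba, hactb⟩ := hb
        have hbn : b < n := hactb.1
        have hSb : Snat O T b ≤ t := le_trans (Snat_mono O T hT (by omega) ha) hSt
        rw [hchar2]
        exact ⟨hba, (hAct b hbn hSb k').mpr hactb⟩
      · rintro ⟨b, k'⟩ hb
        rw [hchar2] at hb
        obtain ⟨hba, hactb⟩ := hb
        have hbn : b < n := hactb.1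
        have hSb : Snat O T b ≤ t := le_trans (Snat_mono O T hT (by omega) ha) hSt
        have hOb : O b ≤ t := le_trans (O_le_Snat O T b) hSb
        have hlo : P / T b ≤ k' := lo_bound hfeas hD hdvd hbn hOb hactb
        simp only []
        ext <;> simp <;> omega
      · rintro ⟨b, k'⟩ hb
        simp only []
        ext <;> simp <;> omega
    rw [hcardeq]
  · have hact' : ¬ active n O C T σ (a, k + P / T a) (t + P) := fun h =>
      hact ((hAct a ha hSt k).mp h)
    constructor
    · intro h; exact absurd (active_of_mem hσ h) hact'
    · intro h; exact absurd (active_of_mem hσ h) hact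

lemma act_shift {n m : ℕ} {O C D T : ℕ → ℕ} {σ : ℕ → Finset Job} {P : ℕ}
    (hσ : isFTPSchedule n m O C T σ) (hT : ∀ i < n, 0 < T i)
    (hD : ∀ i < n, D i ≤ T i) (hfeas : feasible n O C D T σ) (hdvd : ∀ a < n, T a ∣ P) :
    ∀ t : ℕ, ∀ a, a < n → Snat O T a ≤ t → ∀ k,
      (active n O C T σ (a, k + P / T a) (t + P) ↔ active n O C T σ (a, k) t) := by
  intro t
  induction t using Nat.strong_induction_on with
  | _ t IH =>
    intro a ha hSt k
    rcases arrival_dichotomy (O := O) (T := T) a k with hdone | hge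
    · have h1 : ¬ active n O C T σ (a, k) t :=
        not_active_done hfeas hD ha (by show arrival O T (a, k) + T a ≤ t; omega)
      have h2 : ¬ active n O C T σ (a, k + P / T a) (t + P) :=
        not_active_done hfeas hD ha (by
          show arrival O T (a, k + P / T a) + T a ≤ t + P
          rw [arrival_shift (hdvd a ha)]; omega)
      exact iff_of_false h2 h1
    · by_cases hat : arrival O T (a, k) ≤ t
      · have hw : work σ (a, k + P / T a) (t + P) = work σ (a, k) t := by
          have himg : (Finset.range (t + P)).filter (fun s => (a, k + P / T a) ∈ σ s)
              = ((Finset.range t).filter (fun s => (a, k) ∈ σ s)).image (· + P) := by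
            ext x
            simp only [Finset.mem_image, Finset.mem_filter, Finset.mem_range]
            constructor
            · rintro ⟨hx, hmem⟩
              have hxge : arrival O T (a, k) + P ≤ x := by
                have := arrival_le_of_mem hσ hmem
                rwa [arrival_shift (hdvd a ha)] at this
              have hs : Snat O T a ≤ x - P := by omega
              refine ⟨x - P, ⟨by omega, ?_⟩, by omega⟩
              have hmem' := mem_shift hσ hT hD hfeas hdvd
                (IH (x - P) (by omega)) ha hs (k := k)
              rw [show x - P + P = x from by omega] at hmem'
              exact hmem'.mp hmem
            · rintro ⟨s, ⟨hst, hmem⟩, rfl⟩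
              have hs : Snat O T a ≤ s := le_trans hge (arrival_le_of_mem hσ hmem)
              refine ⟨by omega, ?_⟩
              exact (mem_shift hσ hT hD hfeas hdvd (IH s (by omega)) ha hs).mpr hmem
          unfold work
          rw [himg, Finset.card_image_of_injective _ (add_left_injective P)]
        constructor
        · rintro ⟨-, -, hlt⟩
          have hlt' : work σ (a, k + P / T a) (t + P) < C a := hlt
          refine ⟨ha, hat, ?_⟩
          show work σ (a, k) t < C a
          omega
        · rintro ⟨-, -, hlt⟩
          have hlt' : work σ (a, k) t < C a := hlt
          refine ⟨ha, ?_, ?_⟩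
          · show arrival O T (a, k + P / T a) ≤ t + P
            rw [arrival_shift (hdvd a ha)]; omega
          · show work σ (a, k + P / T a) (t + P) < C a
            omega
      · have h1 : ¬ active n O C T σ (a, k) t := fun h => hat h.2.1
        have h2 : ¬ active n O C T σ (a, k + P / T a) (t + P) := by
          intro h
          have := h.2.1
          rw [arrival_shift (hdvd a ha)] at this
          exact hat (by omega)
        exact iff_of_false h2 h1

/-- Periodicity of feasible FTP schedules: for an asynchronous constrained-deadline
system `τ_1 > ⋯ > τ_n` (constant execution times), any feasible FTP schedule is
periodic with period `P = lcm(T_1,…,T_n)` from `S_n` on: the jobs executing at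
`t + P` are exactly the `P`-shifted copies of the jobs executing at `t`. -/
theorem periodicity_of_feasible_FTP_schedules
    (n m : ℕ) (hn : 0 < n) (O C D T : ℕ → ℕ)
    (hT : ∀ i < n, 0 < T i) (hD : ∀ i < n, D i ≤ T i)
    (σ : ℕ → Finset Job)
    (hσ : isFTPSchedule n m O C T σ)
    (hfeas : feasible n O C D T σ)
    (P : ℕ) (hP : P = (Finset.range n).lcm T) :
    ∀ t : ℕ, Snat O T (n - 1) ≤ t →
      σ (t + P) = (σ t).image (fun j => (j.1, j.2 + P / T j.1)) := by
  have hdvd : ∀ a < n, T a ∣ P := fun a ha => hP ▸ Finset.dvd_lcm (Finset.mem_range.mpr ha)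
  have hAct := act_shift hσ hT hD hfeas hdvd
  intro t ht
  apply Finset.ext
  rintro ⟨b, k'⟩
  simp only [Finset.mem_image]
  constructor
  · intro hmem
    have hactj := active_of_mem hσ hmem
    have hb : b < n := hactj.1
    have hSb : Snat O T b ≤ t := le_trans (Snat_mono O T hT (by omega) (by omega)) ht
    have hOb : O b ≤ t := le_trans (O_le_Snat O T b) hSb
    have hlo : P / T b ≤ k' := lo_bound hfeas hD hdvd hb hOb hactj
    refine ⟨(b, k' - P / T b), ?_, ?_⟩
    · have hmem' := (mem_shift hσ hT hD hfeas hdvd (hAct t) hb hSb (k := k' - P / T b))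
      rw [show k' - P / T b + P / T b = k' from by omega] at hmem'
      exact hmem'.mp hmem
    · simp only []
      ext <;> simp <;> omega
  · rintro ⟨⟨c, k⟩, hj, heq⟩
    have hactj := active_of_mem hσ hj
    have hc : c < n := hactj.1
    have hSc : Snat O T c ≤ t := le_trans (Snat_mono O T hT (by omega) (by omega)) ht
    have := (mem_shift hσ hT hD hfeas hdvd (hAct t) hc hSc (k := k)).mpr hj
    have heq' : ((c : ℕ), k + P / T c) = ((b : ℕ), k') := heq
    rw [← heq']
    exact this


end FTP
end

section
/- (Reduction of FSP to FTP) A multi-thread task system τ with tasks τ_i = (O_i, {q_i^1,...,q_i^{v_i}}, D_i, T_i) scheduled by an FSP scheduler on m processors produces exactly the same schedule (thread-by-thread) as the sequential periodic task system τ' = {τ'_1, ..., τ'_r} scheduled by the corresponding FTP scheduler, where τ'_ℓ = (O_ℓ, C_ℓ, D_ℓ, T_ℓ) inherits the parameters of the ℓ-th highest-priority subprogram. -/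
namespace Red

/-- A thread of the multi-thread system: (task index, subprogram index, instance). -/
abbrev Thread := ℕ × ℕ × ℕ
/-- A job of the sequential system: (sequential task index, instance). -/
abbrev Job := ℕ × ℕ

def mtWork (σ : ℕ → Finset Thread) (j : Thread) (t : ℕ) : ℕ :=
  ((Finset.range t).filter (fun s => j ∈ σ s)).card

def seqWork (σ : ℕ → Finset Job) (j : Job) (t : ℕ) : ℕ :=
  ((Finset.range t).filter (fun s => j ∈ σ s)).card

/-- Thread of subprogram `(i, j)`, instance `k`, is active. -/
def mtActive (n : ℕ) (v : ℕ → ℕ) (O T : ℕ → ℕ) (C : ℕ → ℕ → ℕ)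
    (σ : ℕ → Finset Thread) (th : Thread) (t : ℕ) : Prop :=
  th.1 < n ∧ th.2.1 < v th.1 ∧ O th.1 + th.2.2 * T th.1 ≤ t ∧
    mtWork σ th t < C th.1 th.2.1

/-- FSP priority between threads, induced by the subprogram ranking `ρ`
(lower rank = higher priority; same subprogram: earlier instance first). -/
def mtHp (ρ : ℕ → ℕ → ℕ) (th' th : Thread) : Prop :=
  ρ th'.1 th'.2.1 < ρ th.1 th.2.1 ∨ (ρ th'.1 th'.2.1 = ρ th.1 th.2.1 ∧ th'.2.2 < th.2.2)

/-- `σ` is the FSP schedule of the multi-thread system on `m` processors. -/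
def isFSPSchedule (n m : ℕ) (v : ℕ → ℕ) (O T : ℕ → ℕ) (C : ℕ → ℕ → ℕ)
    (ρ : ℕ → ℕ → ℕ) (σ : ℕ → Finset Thread) : Prop :=
  ∀ t : ℕ,
    (σ t).card ≤ m ∧
    (∀ th ∈ σ t, mtActive n v O T C σ th t) ∧
    (∀ th : Thread, mtActive n v O T C σ th t → th ∉ σ t →
      (σ t).card = m ∧ ∀ th' ∈ σ t, mtHp ρ th' th)

def seqActive (r : ℕ) (O' C' T' : ℕ → ℕ) (σ : ℕ → Finset Job) (j : Job) (t : ℕ) : Prop :=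
  j.1 < r ∧ O' j.1 + j.2 * T' j.1 ≤ t ∧ seqWork σ j t < C' j.1

def seqHp (j' j : Job) : Prop :=
  j'.1 < j.1 ∨ (j'.1 = j.1 ∧ j'.2 < j.2)

/-- `σ` is the FTP schedule of the sequential system `τ' = {τ'_1 > ⋯ > τ'_r}`. -/
def isFTPSchedule (r m : ℕ) (O' C' T' : ℕ → ℕ) (σ : ℕ → Finset Job) : Prop :=
  ∀ t : ℕ,
    (σ t).card ≤ m ∧
    (∀ j ∈ σ t, seqActive r O' C' T' σ j t) ∧
    (∀ j : Job, seqActive r O' C' T' σ j t → j ∉ σ t →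
      (σ t).card = m ∧ ∀ j' ∈ σ t, seqHp j' j)

lemma seqHp_iff_lt (j' j : Job) : seqHp j' j ↔ (toLex j' : ℕ ×ₗ ℕ) < toLex j := by
  rw [Prod.Lex.lt_iff]; rfl

lemma sched_uniq (m : ℕ) (A : Job → Prop) (S1 S2 : Finset Job)
    (h1c : S1.card ≤ m) (h1a : ∀ j ∈ S1, A j)
    (h1f : ∀ j, A j → j ∉ S1 → S1.card = m ∧ ∀ j' ∈ S1, seqHp j' j)
    (h2c : S2.card ≤ m) (h2a : ∀ j ∈ S2, A j)
    (h2f : ∀ j, A j → j ∉ S2 → S2.card = m ∧ ∀ j' ∈ S2, seqHp j' j) :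
    S1 = S2 := by
  by_contra hne
  have hD : ((S1 \ S2) ∪ (S2 \ S1)).Nonempty := by
    rw [Finset.nonempty_iff_ne_empty]
    intro h
    apply hne
    rw [Finset.union_eq_empty, Finset.sdiff_eq_empty_iff_subset,
      Finset.sdiff_eq_empty_iff_subset] at h
    exact Finset.Subset.antisymm h.1 h.2
  obtain ⟨j, hjD, hjmin⟩ := Finset.exists_min_image _ (fun j => (toLex j : ℕ ×ₗ ℕ)) hD
  have key : ∀ T1 T2 : Finset Job, (T1.card ≤ m) → (∀ x ∈ T1, A x) →
      (∀ x, A x → x ∉ T2 → T2.card = m ∧ ∀ x' ∈ T2, seqHp x' x) →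
      j ∈ T1 → j ∉ T2 →
      ((S1 \ S2) ∪ (S2 \ S1)) = (T1 \ T2) ∪ (T2 \ T1) → False := by
    intro T1 T2 hTc hTa hTf hj1 hj2 hDeq
    obtain ⟨hcard, hhp⟩ := hTf j (hTa j hj1) hj2
    have hsub : T2 ⊆ T1 := by
      intro x hx
      by_contra hx1
      have hxD : x ∈ (S1 \ S2) ∪ (S2 \ S1) := by
        rw [hDeq, Finset.mem_union, Finset.mem_sdiff, Finset.mem_sdiff]
        exact Or.inr ⟨hx, hx1⟩
      exact absurd ((seqHp_iff_lt x j).mp (hhp x hx)) (not_lt.mpr (hjmin x hxD))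
    have hlt : T2 ⊂ T1 := ⟨hsub, fun h => hj2 (h hj1)⟩
    have := Finset.card_lt_card hlt
    omega
  rw [Finset.mem_union, Finset.mem_sdiff, Finset.mem_sdiff] at hjD
  rcases hjD with ⟨h1, h2⟩ | ⟨h2, h1⟩
  · exact key S1 S2 h1c h1a h2f h1 h2 rfl
  · exact key S2 S1 h2c h2a h1f h2 h1 (Finset.union_comm _ _)

/-- **Reduction of FSP to FTP.**  Let `τ` be a multi-thread system of `n` tasks
`τ_i = (O_i, {q_i^1,…,q_i^{v_i}}, D_i, T_i)` scheduled by an FSP scheduler whose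
priority ranking of the `r = Σ v_i` subprograms is `ρ` (a bijection onto
`{0,…,r−1}`), and let `τ' = {τ'_1, …, τ'_r}` be the sequential periodic system in
which `τ'_ℓ` inherits the parameters of the `ℓ`-th highest-priority subprogram,
scheduled by the corresponding FTP scheduler.  Then the two schedules coincide
thread-by-thread, under the bijection `(i, j, k) ↦ (ρ i j, k)`. -/
theorem FSP_reduces_to_FTP
    (n m r : ℕ) (v : ℕ → ℕ) (hr : r = (Finset.range n).sum v)
    (O T : ℕ → ℕ) (C : ℕ → ℕ → ℕ) (hT : ∀ i < n, 0 < T i)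
    (ρ : ℕ → ℕ → ℕ)
    (hρbij : ∀ ℓ < r, ∃! p : ℕ × ℕ, p.1 < n ∧ p.2 < v p.1 ∧ ρ p.1 p.2 = ℓ)
    (hρrange : ∀ i < n, ∀ j < v i, ρ i j < r)
    (O' C' T' : ℕ → ℕ)
    (hO' : ∀ i < n, ∀ j < v i, O' (ρ i j) = O i)
    (hC' : ∀ i < n, ∀ j < v i, C' (ρ i j) = C i j)
    (hT' : ∀ i < n, ∀ j < v i, T' (ρ i j) = T i)
    (σ : ℕ → Finset Thread) (hσ : isFSPSchedule n m v O T C ρ σ)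
    (σ' : ℕ → Finset Job) (hσ' : isFTPSchedule r m O' C' T' σ')
    (t : ℕ) :
    σ' t = (σ t).image (fun th => (ρ th.1 th.2.1, th.2.2)) := by
  induction t using Nat.strong_induction_on with
  | _ t ih =>
  set φ : Thread → Job := fun th => (ρ th.1 th.2.1, th.2.2) with hφ
  have φinj : ∀ th th' : Thread, th.1 < n → th.2.1 < v th.1 →
      th'.1 < n → th'.2.1 < v th'.1 → φ th = φ th' → th = th' := by
    rintro ⟨i, j, k⟩ ⟨i', j', k'⟩ hi hj hi' hj' heq
    simp only [hφ, Prod.mk.injEq] at heq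
    obtain ⟨hρe, hk⟩ := heq
    obtain ⟨p, -, hup⟩ := hρbij (ρ i j) (hρrange i hi j hj)
    have h1 := hup (i, j) ⟨hi, hj, rfl⟩
    have h2 := hup (i', j') ⟨hi', hj', hρe.symm⟩
    have h3 : (i, j) = (i', j') := h1.trans h2.symm
    simp only [Prod.mk.injEq] at h3
    simp [h3.1, h3.2, hk]
  have hwork : ∀ th : Thread, th.1 < n → th.2.1 < v th.1 →
      seqWork σ' (φ th) t = mtWork σ th t := by
    intro th hi hj
    unfold seqWork mtWork
    congr 1
    apply Finset.filter_congr
    intro s hs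
    rw [Finset.mem_range] at hs
    rw [ih s hs]
    simp only [Finset.mem_image, eq_iff_iff]
    constructor
    · rintro ⟨th', hth', heq⟩
      obtain ⟨hi', hj', -⟩ := (hσ s).2.1 th' hth'
      exact φinj th' th hi' hj' hi hj heq ▸ hth'
    · intro h; exact ⟨th, h, rfl⟩
  have hact : ∀ th : Thread, th.1 < n → th.2.1 < v th.1 →
      (mtActive n v O T C σ th t ↔ seqActive r O' C' T' σ' (φ th) t) := by
    intro th hi hj
    unfold mtActive seqActive
    simp only [hφ]
    rw [hO' th.1 hi th.2.1 hj, hC' th.1 hi th.2.1 hj, hT' th.1 hi th.2.1 hj,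
      hwork th hi hj]
    constructor
    · rintro ⟨-, -, h3, h4⟩; exact ⟨hρrange th.1 hi th.2.1 hj, h3, h4⟩
    · rintro ⟨-, h3, h4⟩; exact ⟨hi, hj, h3, h4⟩
  have hactrev : ∀ j : Job, seqActive r O' C' T' σ' j t →
      ∃ th : Thread, th.1 < n ∧ th.2.1 < v th.1 ∧ φ th = j ∧
        mtActive n v O T C σ th t := by
    intro j hj
    obtain ⟨p, ⟨hp1, hp2, hp3⟩, -⟩ := hρbij j.1 hj.1
    refine ⟨(p.1, p.2, j.2), hp1, hp2, ?_, ?_⟩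
    · simp [hφ, hp3]
    · rw [hact (p.1, p.2, j.2) hp1 hp2]
      have : φ (p.1, p.2, j.2) = j := by simp [hφ, hp3]
      rwa [this]
  -- apply uniqueness
  apply sched_uniq m (fun j => seqActive r O' C' T' σ' j t)
  · exact (hσ' t).1
  · exact (hσ' t).2.1
  · exact (hσ' t).2.2
  · exact Finset.card_image_le.trans (hσ t).1
  · intro j hjmem
    rw [Finset.mem_image] at hjmem
    obtain ⟨th, hth, heq⟩ := hjmem
    have hA := (hσ t).2.1 th hth
    rw [← heq]
    exact (hact th hA.1 hA.2.1).mp hA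
  · intro j hjA hjnot
    obtain ⟨th, hi, hj, heq, hactv⟩ := hactrev j hjA
    have hthnot : th ∉ σ t := by
      intro h
      exact hjnot (Finset.mem_image.mpr ⟨th, h, heq⟩)
    obtain ⟨hcard, hhp⟩ := (hσ t).2.2 th hactv hthnot
    constructor
    · rw [Finset.card_image_of_injOn, hcard]
      intro a ha b hb hab
      have hAa := (hσ t).2.1 a ha
      have hAb := (hσ t).2.1 b hb
      exact φinj a b hAa.1 hAa.2.1 hAb.1 hAb.2.1 hab
    · intro j' hj'mem
      rw [Finset.mem_image] at hj'mem
      obtain ⟨th', hth', heq'⟩ := hj'mem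
      have := hhp th' hth'
      rw [← heq, ← heq']
      exact this


end Red
end

section
/- (Predictability of FSP) FSP schedulers are predictable on m unit-capacity processors: let J and J' be two thread sets identical except that each thread in J has execution time less than or equal to that of the corresponding thread in J'. Then under the same FSP schedule, each thread of J completes no later than the corresponding thread of J'. -/
namespace Pred

variable {N : ℕ}

/-- Execution received by thread `i` before time `t`. -/
def work (σ : ℕ → Finset (Fin N)) (i : Fin N) (t : ℕ) : ℕ :=
  ((Finset.range t).filter (fun s => i ∈ σ s)).card

/-- Thread `i` (arrival `a i`, execution time `e i`) is active at `t`. -/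
def active (a e : Fin N → ℕ) (σ : ℕ → Finset (Fin N)) (i : Fin N) (t : ℕ) : Prop :=
  a i ≤ t ∧ work σ i t < e i

/-- `σ` is the preemptive global fixed-priority schedule of the `N` threads on
`m` unit-capacity processors, for the fixed distinct priorities `π` (lower value
= higher priority): at each instant the `m` highest-priority active threads run. -/
def isFPSchedule (m : ℕ) (a e π : Fin N → ℕ) (σ : ℕ → Finset (Fin N)) : Prop :=
  ∀ t : ℕ,
    (σ t).card ≤ m ∧
    (∀ i ∈ σ t, active a e σ i t) ∧
    (∀ i : Fin N, active a e σ i t → i ∉ σ t →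
      (σ t).card = m ∧ ∀ i' ∈ σ t, π i' < π i)

lemma work_succ (σ : ℕ → Finset (Fin N)) (i : Fin N) (t : ℕ) :
    work σ i (t+1) = work σ i t + if i ∈ σ t then 1 else 0 := by
  unfold work
  rw [Finset.range_add_one, Finset.filter_insert]
  split
  · rw [Finset.card_insert_of_notMem (by simp)]
  · simp

lemma work_mono (σ : ℕ → Finset (Fin N)) (i : Fin N) (t : ℕ) :
    work σ i t ≤ work σ i (t+1) := by
  rw [work_succ]; omega

lemma work_le (m : ℕ) (a e π : Fin N → ℕ) (σ : ℕ → Finset (Fin N))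
    (hσ : isFPSchedule m a e π σ) (i : Fin N) : ∀ t, work σ i t ≤ e i := by
  intro t
  induction t with
  | zero => simp [work]
  | succ t ih =>
    rw [work_succ]
    split
    · next h => exact ((hσ t).2.1 i h).2
    · omega

lemma key (m : ℕ) (a e e' π : Fin N → ℕ)
    (he : ∀ i, e i ≤ e' i)
    (σ σ' : ℕ → Finset (Fin N))
    (hσ : isFPSchedule m a e π σ)
    (hσ' : isFPSchedule m a e' π σ') :
    ∀ t j, min (e j) (work σ' j t) ≤ work σ j t := by
  intro t
  induction t with
  | zero => intro j; simp [work]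
  | succ t ih =>
    intro j
    have hstep := work_succ σ j t
    have hstep' := work_succ σ' j t
    by_cases hjσ : j ∈ σ t
    · have : min (e j) (work σ' j (t+1)) ≤ min (e j) (work σ' j t) + 1 := by
        rw [hstep']; split <;> omega
      have h2 : work σ j (t+1) = work σ j t + 1 := by rw [hstep]; simp [hjσ]
      have := ih j; omega
    · by_cases hdone : work σ j t < e j
      · -- j not done in σ
        by_cases hjσ' : j ∈ σ' t
        · -- hard case: contradiction
          exfalso
          have hact' := (hσ' t).2.1 j hjσ'
          have hact : active a e σ j t := ⟨hact'.1, hdone⟩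
          obtain ⟨hcard, hhp⟩ := (hσ t).2.2 j hact hjσ
          have hsub : σ t ⊆ σ' t := by
            intro k hk
            by_contra hk'
            have hactk := (hσ t).2.1 k hk
            have hwk : work σ' k t < e' k := by
              have := ih k
              have := hactk.2
              have := he k
              omega
            have hactk' : active a e' σ' k t := ⟨hactk.1, hwk⟩
            have := ((hσ' t).2.2 k hactk' hk').2 j hjσ'
            have := hhp k hk
            omega
          have : (σ t).card < (σ' t).card := by
            apply Finset.card_lt_card
            exact ⟨hsub, fun hs => hjσ (hs hjσ')⟩
          have := (hσ' t).1
          omega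
        · have : work σ' j (t+1) = work σ' j t := by rw [hstep']; simp [hjσ']
          have := ih j
          omega
      · -- j done in σ
        have h1 : work σ j t ≤ e j := work_le m a e π σ hσ j t
        have : e j ≤ work σ j t := by omega
        have : min (e j) (work σ' j (t+1)) ≤ e j := min_le_left _ _
        omega

/-- **Predictability of FSP schedulers.**  Let `J` and `J'` be two thread sets
identical (same arrivals `a`, same fixed distinct subprogram priorities `π`)
except that each thread of `J` has execution time `e i ≤ e' i`, the execution
time of the corresponding thread of `J'`.  Then under FSP scheduling on `m`
unit-capacity processors, every thread of `J` completes no later than the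
corresponding thread of `J'`: whenever the `J'`-thread has completed by time
`t`, so has the `J`-thread. -/
theorem FSP_predictable
    (m : ℕ) (a e e' π : Fin N → ℕ)
    (hπ : Function.Injective π)
    (he : ∀ i, e i ≤ e' i)
    (σ σ' : ℕ → Finset (Fin N))
    (hσ : isFPSchedule m a e π σ)
    (hσ' : isFPSchedule m a e' π σ')
    (i : Fin N) (t : ℕ)
    (hdone' : work σ' i t = e' i) :
    work σ i t = e i := by
  have h1 := key m a e e' π he σ σ' hσ hσ' t i
  have h2 := work_le m a e π σ hσ i t
  have h3 := he i
  rw [hdone'] at h1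
  omega

end Pred
end

section
/- (Non-predictability of multi-phase multi-thread hierarchical scheduling) There exists a two-task multi-phase system on 3 processors — τ_1 = (O=0, phases φ_1^1 = {2}, φ_1^2 = {2,2,2}) with higher priority than τ_2 = (O=1, φ_2^1 = {1}) — such that when the thread of phase φ_1^1 executes its worst-case time 2, τ_2's thread completes at time 2, but when φ_1^1's thread executes only 1 time unit (less than worst case), τ_2's thread completes at time 4. Hence multi-phase multi-thread hierarchical schedulers are not predictable. -/
namespace MultiPhase

/-! The multi-phase example: `τ_1 = (O=0, φ_1^1 = {2}, φ_1^2 = {2,2,2})` with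
higher priority than `τ_2 = (O=1, φ_2^1 = {1})`, on `m = 3` processors.
Threads are numbered by decreasing priority:
`0` = the thread of phase `φ_1^1`, `1,2,3` = the three parallel threads of
phase `φ_1^2` (released only when phase `φ_1^1` completes), `4` = the thread of
`τ_2` (arrives at time 1).  `e i` is the execution time of thread `i`. -/

def work (σ : ℕ → Finset (Fin 5)) (i : Fin 5) (t : ℕ) : ℕ :=
  ((Finset.range t).filter (fun s => i ∈ σ s)).card

/-- Thread `i` has been released by time `t`: thread 0 at time 0; threads 1–3
when phase `φ_1^1` (thread 0) has completed; thread 4 at time 1 (offset of `τ_2`). -/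
def released (e : Fin 5 → ℕ) (σ : ℕ → Finset (Fin 5)) (i : Fin 5) (t : ℕ) : Prop :=
  if i = (0 : Fin 5) then True
  else if i = (4 : Fin 5) then 1 ≤ t
  else work σ 0 t = e 0

def active (e : Fin 5 → ℕ) (σ : ℕ → Finset (Fin 5)) (i : Fin 5) (t : ℕ) : Prop :=
  released e σ i t ∧ work σ i t < e i

/-- Hierarchical multi-phase multi-thread schedule on `m = 3` unit-capacity
processors: at each instant the 3 highest-priority active threads run
(`τ_1`'s threads have priority over `τ_2`'s). -/
def isSchedule (e : Fin 5 → ℕ) (σ : ℕ → Finset (Fin 5)) : Prop :=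
  ∀ t : ℕ,
    (σ t).card ≤ 3 ∧
    (∀ i ∈ σ t, active e σ i t) ∧
    (∀ i : Fin 5, active e σ i t → i ∉ σ t →
      (σ t).card = 3 ∧ ∀ i' ∈ σ t, (i' : Fin 5) < i)

lemma work_zero (σ : ℕ → Finset (Fin 5)) (i : Fin 5) : work σ i 0 = 0 := rfl

lemma work_succ (σ : ℕ → Finset (Fin 5)) (i : Fin 5) (t : ℕ) :
    work σ i (t + 1) = work σ i t + (if i ∈ σ t then 1 else 0) := by
  unfold work
  rw [Finset.range_add_one, Finset.filter_insert]
  split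
  · rw [Finset.card_insert_of_notMem (by simp [Finset.mem_filter])]
  · simp

/-- When the set of active threads has at most 3 elements, the schedule runs
exactly the active threads. -/
lemma sched_eq (e : Fin 5 → ℕ) (σ : ℕ → Finset (Fin 5)) (h : isSchedule e σ)
    (t : ℕ) (S : Finset (Fin 5)) (hcard : S.card ≤ 3)
    (hS : ∀ i, active e σ i t ↔ i ∈ S) : σ t = S := by
  obtain ⟨hc, hsub, hmax⟩ := h t
  have hsubS : σ t ⊆ S := fun i hi => (hS i).1 (hsub i hi)
  by_contra hne
  obtain ⟨i, hiS, hiσ⟩ : ∃ i ∈ S, i ∉ σ t := by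
    by_contra hall
    push_neg at hall
    exact hne (Finset.Subset.antisymm hsubS hall)
  obtain ⟨h3, -⟩ := hmax i ((hS i).2 hiS) hiσ
  have hle : (σ t).card ≤ S.card := Finset.card_le_card hsubS
  have heq : σ t = S := Finset.eq_of_subset_of_card_le hsubS (by omega)
  exact hiσ (heq ▸ hiS)

/-- When the active threads are `{1,2,3,4}`, the schedule runs `{1,2,3}`. -/
lemma sched_eq4 (e : Fin 5 → ℕ) (σ : ℕ → Finset (Fin 5)) (h : isSchedule e σ)
    (t : ℕ) (hS : ∀ i, active e σ i t ↔ i ∈ ({1, 2, 3, 4} : Finset (Fin 5))) :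
    σ t = {1, 2, 3} := by
  obtain ⟨hc, hsub, hmax⟩ := h t
  have hsubS : σ t ⊆ {1, 2, 3, 4} := fun i hi => (hS i).1 (hsub i hi)
  have key : ∀ i : Fin 5, i ∈ ({1, 2, 3} : Finset (Fin 5)) → i ∈ σ t := by
    intro i hi
    by_contra hiσ
    obtain ⟨h3, hlt⟩ := hmax i ((hS i).2 (by fin_cases hi <;> decide)) hiσ
    have hsubf : σ t ⊆ ({1, 2, 3, 4} : Finset (Fin 5)).filter (· < i) :=
      fun x hx => Finset.mem_filter.2 ⟨hsubS hx, hlt x hx⟩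
    have hcle := Finset.card_le_card hsubf
    fin_cases hi
    · have : (({1, 2, 3, 4} : Finset (Fin 5)).filter (· < 1)).card = 0 := by decide
      omega
    · have : (({1, 2, 3, 4} : Finset (Fin 5)).filter (· < 2)).card = 1 := by decide
      omega
    · have : (({1, 2, 3, 4} : Finset (Fin 5)).filter (· < 3)).card = 2 := by decide
      omega
  have hsub123 : ({1, 2, 3} : Finset (Fin 5)) ⊆ σ t := fun i hi => key i hi
  have hcard123 : ({1, 2, 3} : Finset (Fin 5)).card = 3 := by decide
  exact (Finset.eq_of_subset_of_card_le hsub123 (by omega)).symm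

/-- **Non-predictability of multi-phase multi-thread hierarchical scheduling.**
With the worst-case execution time `2` for the thread of phase `φ_1^1`, the
thread of `τ_2` completes at time 2; if that thread executes only `1` time unit
(less than its worst case), `τ_2`'s thread completes only at time 4.  Hence
decreasing an execution time increases a completion time: multi-phase
multi-thread hierarchical schedulers are not predictable. -/
theorem multiphase_not_predictable :
    (∀ σ : ℕ → Finset (Fin 5), isSchedule ![2, 2, 2, 2, 1] σ →
      work σ 4 2 = 1 ∧ work σ 4 1 = 0) ∧
    (∀ σ' : ℕ → Finset (Fin 5), isSchedule ![1, 2, 2, 2, 1] σ' →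
      work σ' 4 4 = 1 ∧ work σ' 4 3 = 0) := by
  constructor
  · -- worst case: e = ![2,2,2,2,1]
    intro σ h
    -- time 0: only thread 0 is active
    have h0 : σ 0 = {0} := by
      apply sched_eq _ _ h _ _ (by decide)
      intro i
      fin_cases i <;>
        simp [active, released, work_zero, Matrix.cons_val_zero, Matrix.cons_val_one]
    -- work at time 1
    have hw1 : ∀ i : Fin 5, work σ i 1 = if i ∈ σ 0 then 1 else 0 := by
      intro i; rw [work_succ, work_zero]; omega
    have hw01 : work σ 0 1 = 1 := by rw [hw1, h0]; decide
    have hw41 : work σ 4 1 = 0 := by rw [hw1, h0]; decide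
    -- time 1: threads 0 and 4 are active
    have h1 : σ 1 = {0, 4} := by
      apply sched_eq _ _ h _ _ (by decide)
      intro i
      fin_cases i <;>
        simp [active, released, hw01, hw41, hw1, h0]
    have hw42 : work σ 4 2 = 1 := by
      rw [work_succ, hw41, h1]; decide
    exact ⟨hw42, hw41⟩
  · -- shorter execution: e = ![1,2,2,2,1]
    intro σ h
    -- time 0: only thread 0 is active
    have h0 : σ 0 = {0} := by
      apply sched_eq _ _ h _ _ (by decide)
      intro i
      fin_cases i <;>
        simp [active, released, work_zero]
    have hw1 : ∀ i : Fin 5, work σ i 1 = if i ∈ σ 0 then 1 else 0 := by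
      intro i; rw [work_succ, work_zero]; omega
    have hw01 : work σ 0 1 = 1 := by rw [hw1, h0]; decide
    have hw11 : work σ 1 1 = 0 := by rw [hw1, h0]; decide
    have hw21 : work σ 2 1 = 0 := by rw [hw1, h0]; decide
    have hw31 : work σ 3 1 = 0 := by rw [hw1, h0]; decide
    have hw41 : work σ 4 1 = 0 := by rw [hw1, h0]; decide
    -- time 1: thread 0 is done, threads 1,2,3,4 active, 4 is starved
    have h1 : σ 1 = {1, 2, 3} := by
      apply sched_eq4 _ _ h
      intro i
      fin_cases i <;>
        simp [active, released, hw01, hw11, hw21, hw31, hw41]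
    have hw2 : ∀ i : Fin 5, work σ i 2 = work σ i 1 + if i ∈ σ 1 then 1 else 0 :=
      fun i => work_succ σ i 1
    have hw02 : work σ 0 2 = 1 := by rw [hw2, hw01, h1]; decide
    have hw12 : work σ 1 2 = 1 := by rw [hw2, hw11, h1]; decide
    have hw22 : work σ 2 2 = 1 := by rw [hw2, hw21, h1]; decide
    have hw32 : work σ 3 2 = 1 := by rw [hw2, hw31, h1]; decide
    have hw42 : work σ 4 2 = 0 := by rw [hw2, hw41, h1]; decide
    -- time 2: threads 1,2,3,4 active, 4 still starved
    have h2 : σ 2 = {1, 2, 3} := by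
      apply sched_eq4 _ _ h
      intro i
      fin_cases i <;>
        simp [active, released, hw02, hw12, hw22, hw32, hw42]
    have hw3 : ∀ i : Fin 5, work σ i 3 = work σ i 2 + if i ∈ σ 2 then 1 else 0 :=
      fun i => work_succ σ i 2
    have hw03 : work σ 0 3 = 1 := by rw [hw3, hw02, h2]; decide
    have hw13 : work σ 1 3 = 2 := by rw [hw3, hw12, h2]; decide
    have hw23 : work σ 2 3 = 2 := by rw [hw3, hw22, h2]; decide
    have hw33 : work σ 3 3 = 2 := by rw [hw3, hw32, h2]; decide
    have hw43 : work σ 4 3 = 0 := by rw [hw3, hw42, h2]; decide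
    -- time 3: only thread 4 is active
    have h3 : σ 3 = {4} := by
      apply sched_eq _ _ h _ _ (by decide)
      intro i
      fin_cases i <;>
        simp [active, released, hw03, hw13, hw23, hw33, hw43]
    have hw44 : work σ 4 4 = 1 := by
      rw [work_succ, hw43, h3]; decide
    exact ⟨hw44, hw43⟩

end MultiPhase
end
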